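/- For λ = 0 and ε = 1, the principal series module I_{0,1} decomposes as a direct sum of two irreducible sl₂-submodules: D₀⁺ spanned by {w_k : k ≥ 1} and D₀⁻ spanned by {w_k : k ≤ −1}. -/

import Mathlib

/-! The principal series module `I_{λ,ε}` in the compact picture: basis
`{w_k : k ≡ ε (mod 2)}`, parametrized as `k = ε + 2n`, with `w_{ε+2n}` encoded
as `Finsupp.single n 1` in `ℤ →₀ ℂ`. -/

/-- `H · w_k = k · w_k`. -/
noncomputable def psH (ε : ℤ) : (ℤ →₀ ℂ) →ₗ[ℂ] (ℤ →₀ ℂ) :=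
  Finsupp.lsum ℂ fun n : ℤ => (((ε + 2 * n : ℤ) : ℂ)) • Finsupp.lsingle n

/-- `E · w_k = ((λ+k+1)/2) · w_{k+2}`. -/
noncomputable def psE (L : ℂ) (ε : ℤ) : (ℤ →₀ ℂ) →ₗ[ℂ] (ℤ →₀ ℂ) :=
  Finsupp.lsum ℂ fun n : ℤ => ((L + ((ε + 2 * n : ℤ) : ℂ) + 1) / 2) • Finsupp.lsingle (n + 1)

/-- `F · w_k = ((λ−k+1)/2) · w_{k−2}`. -/
noncomputable def psF (L : ℂ) (ε : ℤ) : (ℤ →₀ ℂ) →ₗ[ℂ] (ℤ →₀ ℂ) :=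
  Finsupp.lsum ℂ fun n : ℤ => ((L - ((ε + 2 * n : ℤ) : ℂ) + 1) / 2) • Finsupp.lsingle (n - 1)

/-- A subspace of `I_{λ,ε}` is sl₂-invariant if it is stable under `H`, `E` and `F`. -/
def SL2Invariant (L : ℂ) (ε : ℤ) (W : Submodule ℂ (ℤ →₀ ℂ)) : Prop :=
  (∀ x ∈ W, psH ε x ∈ W) ∧ (∀ x ∈ W, psE L ε x ∈ W) ∧ (∀ x ∈ W, psF L ε x ∈ W)

/-- `D₀⁺`: the span of the basis vectors `w_k` of `I_{0,1}` with `k ≥ 1`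
(i.e. `k = 1 + 2n` with `n ≥ 0`). -/
noncomputable def D0plus : Submodule ℂ (ℤ →₀ ℂ) :=
  Submodule.span ℂ {f | ∃ n : ℤ, 0 ≤ n ∧ f = Finsupp.single n 1}

/-- `D₀⁻`: the span of the basis vectors `w_k` of `I_{0,1}` with `k ≤ −1`
(i.e. `k = 1 + 2n` with `n ≤ −1`). -/
noncomputable def D0minus : Submodule ℂ (ℤ →₀ ℂ) :=
  Submodule.span ℂ {f | ∃ n : ℤ, n ≤ -1 ∧ f = Finsupp.single n 1}

/-! Each basis vector `w_k` is an `H`-eigenvector with eigenvalue `k`, and these eigenvalues are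
distinct, so an `H`-stable subspace is spanned by the basis vectors it contains. For `λ = 0`,
`ε = 1` the coefficient of `E` on `w_k` vanishes only at `k = -1` and that of `F` only at `k = 1`;
hence `E`, `F` move between consecutive basis vectors on either side of this gap, and every
nonzero invariant subspace of `D₀⁺` or `D₀⁻` contains all of its basis vectors. -/

open Finsupp

theorem Finsupp.single_apply_mem_of_diagonal {ι K : Type*} [Field K] {T : Module.End K (ι →₀ K)} {μ : ι → K}
    (hμ : Function.Injective μ) (hT : ∀ i c, T (single i c) = μ i • single i c)
    {W : Submodule K (ι →₀ K)} (hW : W ≤ W.comap T) {x : ι →₀ K} (hx : x ∈ W) (i : ι) :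
    single i (x i) ∈ W := by
  classical
  by_cases hi : i ∈ x.support
  swap
  · simp [notMem_support_iff.mp hi]
  -- `aeval T p` kills every component of `x` except the `i`-th one.
  set p : Polynomial K := ∏ j ∈ x.support.erase i, (Polynomial.X - Polynomial.C (μ j))
  have hp_ne : p.eval (μ i) ≠ 0 := by
    simp only [p, Polynomial.eval_prod, Polynomial.eval_sub, Polynomial.eval_X,
      Polynomial.eval_C]
    exact Finset.prod_ne_zero_iff.mpr fun j hj =>
      sub_ne_zero.mpr fun h => (Finset.ne_of_mem_erase hj) (hμ h).symm
  have hp_x : Polynomial.aeval T p x = p.eval (μ i) • single i (x i) := by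
    conv_lhs => rw [← x.sum_single, Finsupp.sum, map_sum]
    simp only [Module.End.aeval_apply_of_mem_apply_eq_smul (hT _ _)]
    refine Finset.sum_eq_single_of_mem i hi fun j hj hji => ?_
    have hpj : p.eval (μ j) = 0 := by
      rw [Polynomial.eval_prod]
      exact Finset.prod_eq_zero (Finset.mem_erase.mpr ⟨hji, hj⟩) (by simp)
    rw [hpj, zero_smul]
  have := Polynomial.aeval_apply_smul_mem_of_le_comap hx p T hW
  rw [hp_x] at this
  exact (W.smul_mem_iff hp_ne).mp this

theorem Finsupp.supported_le_comap_of_single_mem {α R : Type*} [Semiring R] {S : Set α}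
    (T : (α →₀ R) →ₗ[R] (α →₀ R)) (h : ∀ n ∈ S, T (single n 1) ∈ supported R R S) :
    supported R R S ≤ (supported R R S).comap T := by
  conv_lhs => rw [supported_eq_span_single]
  exact Submodule.span_le.mpr (by rintro _ ⟨n, hn, rfl⟩; exact h n hn)

theorem span_setOf_single_eq_supported (p : ℤ → Prop) :
    Submodule.span ℂ {f | ∃ n : ℤ, p n ∧ f = single n (1 : ℂ)} = supported ℂ ℂ {n | p n} := by
  rw [supported_eq_span_single]
  congr 1
  ext f
  simp [eq_comm]

theorem D0plus_eq_supported : D0plus = supported ℂ ℂ (Set.Ici 0) :=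
  span_setOf_single_eq_supported _

theorem D0minus_eq_supported : D0minus = supported ℂ ℂ (Set.Iic (-1)) :=
  span_setOf_single_eq_supported _

theorem psH_single (ε n : ℤ) (c : ℂ) :
    psH ε (single n c) = ((ε + 2 * n : ℤ) : ℂ) • single n c := by
  rw [psH, lsum_single, LinearMap.smul_apply, lsingle_apply]

theorem psE_single (L : ℂ) (ε n : ℤ) (c : ℂ) :
    psE L ε (single n c) = ((L + ((ε + 2 * n : ℤ) : ℂ) + 1) / 2) • single (n + 1) c := by
  rw [psE, lsum_single, LinearMap.smul_apply, lsingle_apply]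

theorem psF_single (L : ℂ) (ε n : ℤ) (c : ℂ) :
    psF L ε (single n c) = ((L - ((ε + 2 * n : ℤ) : ℂ) + 1) / 2) • single (n - 1) c := by
  rw [psF, lsum_single, LinearMap.smul_apply, lsingle_apply]

theorem psE_zero_one_single (n : ℤ) (c : ℂ) :
    psE 0 1 (single n c) = ((n + 1 : ℤ) : ℂ) • single (n + 1) c := by
  rw [psE_single]
  congr 1
  push_cast
  ring

theorem psF_zero_one_single (n : ℤ) (c : ℂ) :
    psF 0 1 (single n c) = ((-n : ℤ) : ℂ) • single (n - 1) c := by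
  rw [psF_single]
  congr 1
  push_cast
  ring

theorem single_mem_of_psH_stable {ε : ℤ} {W : Submodule ℂ (ℤ →₀ ℂ)}
    (hW : ∀ x ∈ W, psH ε x ∈ W) {x : ℤ →₀ ℂ} (hx : x ∈ W) (n : ℤ) : single n (x n) ∈ W :=
  single_apply_mem_of_diagonal (μ := fun n : ℤ => ((ε + 2 * n : ℤ) : ℂ))
    (fun m n h => by have := Int.cast_injective h; omega) (psH_single ε) (fun x hx => hW x hx)
    hx n

theorem sl2Invariant_supported {S : Set ℤ} (hE : ∀ n ∈ S, n + 1 ∉ S → n = -1)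
    (hF : ∀ n ∈ S, n - 1 ∉ S → n = 0) : SL2Invariant 0 1 (supported ℂ ℂ S) := by
  refine ⟨fun x hx => supported_le_comap_of_single_mem _ (fun n hn => ?_) hx,
    fun x hx => supported_le_comap_of_single_mem _ (fun n hn => ?_) hx,
    fun x hx => supported_le_comap_of_single_mem _ (fun n hn => ?_) hx⟩
  · rw [psH_single]
    exact Submodule.smul_mem _ _ (single_mem_supported ℂ _ hn)
  · rw [psE_zero_one_single]
    by_cases h : n + 1 ∈ S
    · exact Submodule.smul_mem _ _ (single_mem_supported ℂ _ h)
    · simp [hE n hn h]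
  · rw [psF_zero_one_single]
    by_cases h : n - 1 ∈ S
    · exact Submodule.smul_mem _ _ (single_mem_supported ℂ _ h)
    · simp [hF n hn h]

section Ladder

variable {W : Submodule ℂ (ℤ →₀ ℂ)} (hW : SL2Invariant 0 1 W)
include hW

theorem single_add_one_mem_of_sl2Invariant {n : ℤ} (hn : n ≠ -1) (h : single n (1 : ℂ) ∈ W) :
    single (n + 1) (1 : ℂ) ∈ W := by
  have := hW.2.1 _ h
  rw [psE_zero_one_single] at this
  exact (W.smul_mem_iff (Int.cast_ne_zero.mpr (by omega))).mp this

theorem single_sub_one_mem_of_sl2Invariant {n : ℤ} (hn : n ≠ 0) (h : single n (1 : ℂ) ∈ W) :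
    single (n - 1) (1 : ℂ) ∈ W := by
  have := hW.2.2 _ h
  rw [psF_zero_one_single] at this
  exact (W.smul_mem_iff (Int.cast_ne_zero.mpr (by omega))).mp this

theorem single_mem_of_sl2Invariant_of_ordConnected {S : Set ℤ} (hS : S.OrdConnected)
    (hgap : ¬(-1 ∈ S ∧ 0 ∈ S)) {m : ℤ} (hm : m ∈ S) (hmW : single m (1 : ℂ) ∈ W) {n : ℤ}
    (hn : n ∈ S) : single n (1 : ℂ) ∈ W := by
  rcases le_total m n with hmn | hnm
  · induction n, hmn using Int.leInduction with
    | base => exact hmW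
    | succ k hmk ih =>
      have hk : k ∈ S := hS.out hm hn ⟨hmk, by omega⟩
      exact single_add_one_mem_of_sl2Invariant hW (by rintro rfl; exact hgap ⟨hk, hn⟩) (ih hk)
  · induction n, hnm using Int.leInductionDown with
    | base => exact hmW
    | pred k hkm ih =>
      have hk : k ∈ S := hS.out hn hm ⟨by omega, hkm⟩
      exact single_sub_one_mem_of_sl2Invariant hW (by rintro rfl; exact hgap ⟨hn, hk⟩) (ih hk)

end Ladder

theorem eq_supported_of_sl2Invariant {S : Set ℤ} (hS : S.OrdConnected) (hgap : ¬(-1 ∈ S ∧ 0 ∈ S))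
    {W : Submodule ℂ (ℤ →₀ ℂ)} (hWS : W ≤ supported ℂ ℂ S) (hW : SL2Invariant 0 1 W)
    (hW0 : W ≠ ⊥) : W = supported ℂ ℂ S := by
  obtain ⟨x, hxW, hx0⟩ := W.exists_mem_ne_zero_of_ne_bot hW0
  obtain ⟨m, hm⟩ := support_nonempty_iff.mpr hx0
  have hmS : m ∈ S := (mem_supported ℂ x).mp (hWS hxW) hm
  have hmW : single m (1 : ℂ) ∈ W := by
    have := W.smul_mem (x m)⁻¹ (single_mem_of_psH_stable hW.1 hxW m)
    rwa [smul_single, smul_eq_mul, inv_mul_cancel₀ (mem_support_iff.mp hm)] at this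
  refine le_antisymm hWS ?_
  rw [supported_eq_span_single]
  exact Submodule.span_le.mpr fun _ ⟨n, hn, hf⟩ =>
    hf ▸ single_mem_of_sl2Invariant_of_ordConnected hW hS hgap hmS hmW hn

/-- The principal series `I_{0,1}` decomposes as the direct sum of the two limits of
discrete series `D₀⁺` and `D₀⁻`, each of which is an irreducible sl₂-submodule. -/
theorem limit_of_discrete_series_decomposition :
    SL2Invariant (0 : ℂ) 1 D0plus ∧
    SL2Invariant (0 : ℂ) 1 D0minus ∧
    D0plus ⊔ D0minus = ⊤ ∧
    D0plus ⊓ D0minus = ⊥ ∧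
    (∀ W : Submodule ℂ (ℤ →₀ ℂ), W ≤ D0plus → SL2Invariant (0 : ℂ) 1 W → W ≠ ⊥ →
      W = D0plus) ∧
    (∀ W : Submodule ℂ (ℤ →₀ ℂ), W ≤ D0minus → SL2Invariant (0 : ℂ) 1 W → W ≠ ⊥ →
      W = D0minus) := by
  rw [D0plus_eq_supported, D0minus_eq_supported]
  refine ⟨sl2Invariant_supported ?_ ?_, sl2Invariant_supported ?_ ?_, ?_, ?_,
    fun W => eq_supported_of_sl2Invariant Set.ordConnected_Ici (by simp),
    fun W => eq_supported_of_sl2Invariant Set.ordConnected_Iic (by simp)⟩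
  all_goals try
    intro n hn h
    simp only [Set.mem_Ici, Set.mem_Iic] at hn h
    omega
  · rw [← supported_union, ← supported_univ]
    congr 1
    ext n
    simp only [Set.mem_union, Set.mem_Ici, Set.mem_Iic, Set.mem_univ, iff_true]
    omega
  · rw [← supported_inter, ← supported_empty]
    congr 1
    ext n
    simp only [Set.mem_inter_iff, Set.mem_Ici, Set.mem_Iic, Set.mem_empty_iff_false, iff_false]
    omega
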